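/- arXiv:0902.0742 — 4 statements merged into one kernel-verified Lean document; each statement's English description precedes it below -/
import Mathlib

section
/- If P is a transitive relation (P = Tr P) and Q is a relation avoiding the set X (Q = Q^{-X}), then restricting the transitive closure of P ∪ Q away from X commutes with the closure: (Tr(P ∪ Q))^{-X} = Tr((P ∪ Q)^{-X}). -/
/-!
`Tr R` is the diagonal on `Dom R` together with the transitive closure of `R`. The content is
that a chain of `P ∪ Q`-steps between points outside `X` can be rerouted around `X`: since the
`Q`-steps avoid `X`, a maximal run through `X` consists of `P`-steps only and, `P` being
transitive, collapses to a single `P`-step between points outside `X`.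
-/

variable {α : Type*}

def Dom (R : Set (α × α)) : Set α := {x | ∃ y, (x, y) ∈ R ∨ (y, x) ∈ R}

def ReflRel (R : Set (α × α)) : Prop := ∀ x ∈ Dom R, (x, x) ∈ R

def TransRel (R : Set (α × α)) : Prop :=
  ∀ x y z, (x, y) ∈ R → (y, z) ∈ R → (x, z) ∈ R

def IsPre (R : Set (α × α)) : Prop := ReflRel R ∧ TransRel R

def Tr (R : Set (α × α)) : Set (α × α) :=
  {p | ∀ S : Set (α × α), IsPre S → Dom S = Dom R → R ⊆ S → p ∈ S}

/-- `R^{-X}`: the pairs of `R` both of whose components avoid `X`. -/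
def Res (R : Set (α × α)) (X : Set α) : Set (α × α) :=
  {p ∈ R | p.1 ∉ X ∧ p.2 ∉ X}

open Relation

def toRel (R : Set (α × α)) : α → α → Prop := fun a b => (a, b) ∈ R

def TrGen (R : Set (α × α)) : Set (α × α) :=
  {p | (p.1 = p.2 ∧ p.1 ∈ Dom R) ∨ TransGen (toRel R) p.1 p.2}

section Closure

variable {R : Set (α × α)}

lemma transGen_mem_dom {a b : α} (h : TransGen (toRel R) a b) : a ∈ Dom R ∧ b ∈ Dom R := by
  induction h with
  | single h => exact ⟨⟨_, Or.inl h⟩, ⟨_, Or.inr h⟩⟩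
  | tail _ h ih => exact ⟨ih.1, ⟨_, Or.inr h⟩⟩

lemma dom_trGen (R : Set (α × α)) : Dom (TrGen R) = Dom R := by
  ext x
  constructor
  · rintro ⟨y, ⟨⟨(rfl : x = y), hx⟩ | h⟩ | ⟨⟨(rfl : y = x), hy⟩ | h⟩⟩
    exacts [hx, (transGen_mem_dom h).1, hy, (transGen_mem_dom h).2]
  · exact fun hx => ⟨x, Or.inl (Or.inl ⟨rfl, hx⟩)⟩

lemma isPre_trGen (R : Set (α × α)) : IsPre (TrGen R) := by
  refine ⟨fun x hx => Or.inl ⟨rfl, dom_trGen R ▸ hx⟩, ?_⟩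
  rintro x y z hxy (⟨(rfl : y = z), -⟩ | hyz)
  · exact hxy
  · rcases hxy with ⟨(rfl : x = y), -⟩ | hxy
    exacts [Or.inr hyz, Or.inr (hxy.trans hyz)]

lemma tr_eq_trGen (R : Set (α × α)) : Tr R = TrGen R := by
  refine Set.Subset.antisymm
    (fun p hp => hp _ (isPre_trGen R) (dom_trGen R) fun q hq => Or.inr (.single hq)) ?_
  rintro ⟨a, b⟩ (⟨(rfl : a = b), ha⟩ | (hab : TransGen _ a b)) S ⟨hrefl, htrans⟩ hdom hRS
  · exact hrefl a (hdom ▸ ha)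
  · induction hab with
    | single h => exact hRS h
    | tail _ h ih => exact htrans _ _ _ ih (hRS h)

lemma isPre_tr (R : Set (α × α)) : IsPre (Tr R) :=
  tr_eq_trGen R ▸ isPre_trGen R

end Closure

section Restriction

variable {R : Set (α × α)} {X : Set α}

lemma notMem_of_transGen_res {a b : α} (h : TransGen (toRel (Res R X)) a b) : a ∉ X ∧ b ∉ X := by
  induction h with
  | single h => exact h.2
  | tail _ h ih => exact ⟨ih.1, h.2.2⟩

lemma trGen_res_subset_res_trGen (R : Set (α × α)) (X : Set α) :
    TrGen (Res R X) ⊆ Res (TrGen R) X := by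
  rintro ⟨a, b⟩ (⟨(rfl : a = b), y, hy | hy⟩ | hab)
  · exact ⟨Or.inl ⟨rfl, y, Or.inl hy.1⟩, hy.2.1, hy.2.1⟩
  · exact ⟨Or.inl ⟨rfl, y, Or.inr hy.1⟩, hy.2.2, hy.2.2⟩
  · exact ⟨Or.inr (TransGen.mono (fun _ _ h => h.1) _ _ hab), notMem_of_transGen_res hab⟩

lemma mem_dom_res_of_mem {a z : α} (h : (a, z) ∈ R ∨ (z, a) ∈ R) (ha : a ∉ X) (hz : z ∉ X) :
    a ∈ Dom (Res R X) := by
  rcases h with h | h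
  exacts [⟨z, Or.inl ⟨h, ha, hz⟩⟩, ⟨z, Or.inr ⟨h, hz, ha⟩⟩]

end Restriction

section Rerouting

variable {P Q : Set (α × α)} {X : Set α}

lemma notMem_of_mem_of_eq_res (hQ : Q = Res Q X) {p : α × α} (hp : p ∈ Q) :
    p.1 ∉ X ∧ p.2 ∉ X := by
  rw [hQ] at hp
  exact hp.2

lemma reflTransGen_res_of_reflGen {a b : α} (h : ReflGen (toRel P) a b) (ha : a ∉ X) (hb : b ∉ X) :
    ReflTransGen (toRel (Res (P ∪ Q) X)) a b := by
  cases h with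
  | refl => rfl
  | single h => exact .single ⟨Or.inl h, ha, hb⟩

lemma reflGen_trans_of_mem {a b c : α} (hP : TransRel P) (hab : (a, b) ∈ P)
    (hbc : ReflGen (toRel P) b c) : (a, c) ∈ P := by
  cases hbc with
  | refl => exact hab
  | single hbc => exact hP _ _ _ hab hbc

lemma exists_reflGen_reflTransGen_res (hP : TransRel P) (hQ : Q = Res Q X) {x y : α}
    (h : ReflTransGen (toRel (P ∪ Q)) x y) (hy : y ∉ X) :
    ∃ d ∉ X, ReflGen (toRel P) x d ∧ ReflTransGen (toRel (Res (P ∪ Q) X)) d y := by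
  induction h using ReflTransGen.head_induction_on with
  | refl => exact ⟨y, hy, .refl, .refl⟩
  | head hxc _ ih =>
    obtain ⟨d, hd, hcd, hdy⟩ := ih
    rcases hxc with hxc | hxc
    · exact ⟨d, hd, .single (reflGen_trans_of_mem hP hxc hcd), hdy⟩
    · obtain ⟨hx, hc⟩ := notMem_of_mem_of_eq_res hQ hxc
      exact ⟨_, hx, .refl,
        .head ⟨Or.inr hxc, hx, hc⟩ ((reflTransGen_res_of_reflGen hcd hc hd).trans hdy)⟩

lemma transGen_res_of_transGen (hP : TransRel P) (hQ : Q = Res Q X) {x y : α}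
    (h : TransGen (toRel (P ∪ Q)) x y) (hx : x ∉ X) (hy : y ∉ X) :
    TransGen (toRel (Res (P ∪ Q) X)) x y := by
  obtain ⟨c, hxc, hcy⟩ := TransGen.head'_iff.mp h
  obtain ⟨d, hd, hcd, hdy⟩ := exists_reflGen_reflTransGen_res hP hQ hcy hy
  rcases hxc with hxc | hxc
  · exact .head' ⟨Or.inl (reflGen_trans_of_mem hP hxc hcd), hx, hd⟩ hdy
  · have hc := (notMem_of_mem_of_eq_res hQ hxc).2
    exact .head' ⟨Or.inr hxc, hx, hc⟩ ((reflTransGen_res_of_reflGen hcd hc hd).trans hdy)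

lemma res_trGen_subset_trGen_res (hP : IsPre P) (hQ : Q = Res Q X) :
    Res (TrGen (P ∪ Q)) X ⊆ TrGen (Res (P ∪ Q) X) := by
  rintro ⟨a, b⟩ ⟨⟨(rfl : a = b), z, hz⟩ | hab, ha, hb⟩
  · refine Or.inl ⟨rfl, ?_⟩
    rcases hz with (hz | hz) | (hz | hz)
    · exact mem_dom_res_of_mem (Or.inl (Or.inl (hP.1 a ⟨z, Or.inl hz⟩))) ha ha
    · exact mem_dom_res_of_mem (Or.inl (Or.inr hz)) ha (notMem_of_mem_of_eq_res hQ hz).2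
    · exact mem_dom_res_of_mem (Or.inl (Or.inl (hP.1 a ⟨z, Or.inr hz⟩))) ha ha
    · exact mem_dom_res_of_mem (Or.inr (Or.inr hz)) ha (notMem_of_mem_of_eq_res hQ hz).1
  · exact Or.inr (transGen_res_of_transGen hP.2 hQ hab ha hb)

end Rerouting

theorem stmt2 (P Q : Set (α × α)) (X : Set α)
    (hP : P = Tr P) (hQ : Q = Res Q X) :
    Res (Tr (P ∪ Q)) X = Tr (Res (P ∪ Q) X) := by
  have hPre : IsPre P := hP ▸ isPre_tr P
  rw [tr_eq_trGen, tr_eq_trGen]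
  exact (res_trGen_subset_trGen_res hPre hQ).antisymm (trGen_res_subset_res_trGen _ X)
end

section
/- Composition of split preorders is associative: for split preorders P from A to B, Q from B to C, and S from C to D, one has S ∘ (Q ∘ P) = (S ∘ Q) ∘ P. -/
universe u

variable {A B C D : Type u}

/-- The glued relation on `A ⊕ (B ⊕ C)` obtained from a split preorder `P` on
`A ⊕ B` and a split preorder `Q` on `B ⊕ C`. -/
def glue (P : A ⊕ B → A ⊕ B → Prop) (Q : B ⊕ C → B ⊕ C → Prop) :
    A ⊕ (B ⊕ C) → A ⊕ (B ⊕ C) → Prop := fun x y =>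
  (∃ u v, P u v ∧ Sum.map id Sum.inl u = x ∧ Sum.map id Sum.inl v = y) ∨
  (∃ u v, Q u v ∧ Sum.inr u = x ∧ Sum.inr v = y)

/-- Composition of split preorders (diagrammatic order: `scomp P Q = Q ∘ P`):
the transitive closure of the glued relation, restricted to pairs avoiding the
middle layer `B`. -/
def scomp (P : A ⊕ B → A ⊕ B → Prop) (Q : B ⊕ C → B ⊕ C → Prop) :
    A ⊕ C → A ⊕ C → Prop := fun x y =>
  Relation.ReflTransGen (glue P Q) (Sum.map id Sum.inr x) (Sum.map id Sum.inr y)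

/-! Both sides are the restriction to `A ⊕ D` of the reflexive-transitive closure of the
three-fold glued relation `glue P (glue Q S)` on `A ⊕ (B ⊕ (C ⊕ D))`. Hiding a middle layer
commutes with adjoining relations that do not touch it: in a path of `Map R f f ⊔ T` between
points of `range f`, each maximal run of `T`-steps starts and ends in `range f`, so it can be
replaced by a run of the relation `H` whose closure is that of `T` pulled back along `f`. -/

namespace Relation

variable {α β γ δ : Type*}

theorem reflTransGen_map_apply_iff {N : α → α → Prop} {e : α → β} (he : e.Injective)
    (a : α) (y : β) :
    ReflTransGen (Relation.Map N e e) (e a) y ↔ ∃ b, e b = y ∧ ReflTransGen N a b := by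
  constructor
  · intro h
    induction h with
    | refl => exact ⟨a, rfl, .refl⟩
    | tail _ hstep ih =>
      obtain ⟨b, rfl, hab⟩ := ih
      obtain ⟨b', c, hbc, hb', rfl⟩ := hstep
      exact ⟨c, rfl, hab.tail (he hb' ▸ hbc)⟩
  · rintro ⟨b, rfl, hab⟩
    exact hab.lift e fun _ _ h => ⟨_, _, h, rfl, rfl⟩

theorem reflTransGen_map_iff_of_notMem_range {N : α → α → Prop} {e : α → β} {x : β}
    (hx : x ∉ Set.range e) (y : β) : ReflTransGen (Relation.Map N e e) x y ↔ y = x :=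
  reflTransGen_iff_eq fun _ ⟨a, _, _, ha, _⟩ => hx ⟨a, ha⟩

theorem reflTransGen_onFun_reflTransGen {N : α → α → Prop} {ι : β → α} {w w' : β} :
    ReflTransGen (fun w w' => ReflTransGen N (ι w) (ι w')) w w' ↔ ReflTransGen N (ι w) (ι w') :=
  ⟨ReflTransGen.lift' ι (fun _ _ h => h) _ _, fun h => .single h⟩

/-- `hpull` says that the square `f ∘ g = e ∘ ι` is a pullback. -/
theorem reflTransGen_map_onFun_iff {N : γ → γ → Prop} {ι : α → γ} {g : α → β} {e : γ → δ}
    {f : β → δ} (hg : g.Injective) (he : e.Injective) (hf : f.Injective)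
    (hpull : ∀ y z, f y = e z ↔ ∃ w, g w = y ∧ ι w = z) (u v : β) :
    ReflTransGen (Relation.Map (fun w w' => ReflTransGen N (ι w) (ι w')) g g) u v ↔
      ReflTransGen (Relation.Map N e e) (f u) (f v) := by
  by_cases hu : u ∈ Set.range g
  · obtain ⟨w, rfl⟩ := hu
    have hsq : f (g w) = e (ι w) := (hpull _ _).2 ⟨w, rfl, rfl⟩
    rw [hsq, reflTransGen_map_apply_iff hg, reflTransGen_map_apply_iff he]
    simp only [reflTransGen_onFun_reflTransGen]
    constructor
    · rintro ⟨w', rfl, h⟩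
      exact ⟨ι w', ((hpull _ _).2 ⟨w', rfl, rfl⟩).symm, h⟩
    · rintro ⟨z, hz, h⟩
      obtain ⟨w', rfl, rfl⟩ := (hpull _ _).1 hz.symm
      exact ⟨w', rfl, h⟩
  · have hfu : f u ∉ Set.range e := by
      rintro ⟨z, hz⟩
      obtain ⟨w, hw, -⟩ := (hpull _ _).1 hz.symm
      exact hu ⟨w, hw⟩
    rw [reflTransGen_map_iff_of_notMem_range hu, reflTransGen_map_iff_of_notMem_range hfu,
      hf.eq_iff]

theorem reflTransGen_sup_map_iff {R H : α → α → Prop} {T : β → β → Prop} {f : α → β}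
    (hH : ∀ u v, ReflTransGen H u v ↔ ReflTransGen T (f u) (f v)) (u v : α) :
    ReflTransGen (R ⊔ H) u v ↔ ReflTransGen (Relation.Map R f f ⊔ T) (f u) (f v) := by
  constructor
  · intro h
    refine h.lift' f fun a b hab => ?_
    rcases hab with hR | hH'
    · exact .single (Or.inl ⟨a, b, hR, rfl, rfl⟩)
    · exact ReflTransGen.mono le_sup_right _ _ ((hH a b).1 (.single hH'))
  · suffices ∀ z, ReflTransGen (Relation.Map R f f ⊔ T) (f u) z →
        ∃ w, ReflTransGen (R ⊔ H) u w ∧ ReflTransGen T (f w) z by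
      intro h
      obtain ⟨w, huw, hwv⟩ := this _ h
      exact huw.trans (ReflTransGen.mono le_sup_right _ _ ((hH w v).2 hwv))
    intro z h
    induction h with
    | refl => exact ⟨u, .refl, .refl⟩
    | tail _ hstep ih =>
      obtain ⟨w, huw, hwz⟩ := ih
      rcases hstep with ⟨p, q, hpq, rfl, rfl⟩ | hT
      · refine ⟨q, ?_, .refl⟩
        exact (huw.trans (ReflTransGen.mono le_sup_right _ _ ((hH w p).2 hwz))).tail (Or.inl hpq)
      · exact ⟨w, huw, hwz.tail hT⟩

end Relation

open Function Relation

section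

variable (P : A ⊕ B → A ⊕ B → Prop) (Q : B ⊕ C → B ⊕ C → Prop) (S : C ⊕ D → C ⊕ D → Prop)

theorem glue_eq_sup :
    glue P Q = Relation.Map P (Sum.map id Sum.inl) (Sum.map id Sum.inl) ⊔
      Relation.Map Q Sum.inr Sum.inr :=
  rfl

theorem glue_glue_eq_map_sup :
    glue P (glue Q S) =
      Relation.Map (Relation.Map P (Sum.map id Sum.inl) (Sum.map id Sum.inl))
        (Sum.map id (Sum.map id Sum.inr)) (Sum.map id (Sum.map id Sum.inr)) ⊔
      Relation.Map (glue Q S) Sum.inr Sum.inr := by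
  rw [map_map, Sum.map_comp_map]
  rfl

theorem glue_glue_eq_sup_map :
    glue P (glue Q S) =
      Relation.Map (Relation.Map S Sum.inr Sum.inr) (Sum.map id Sum.inr) (Sum.map id Sum.inr) ⊔
      Relation.Map (glue P Q) (Sum.map id (Sum.map id Sum.inl)) (Sum.map id (Sum.map id Sum.inl)) := by
  ext x y
  simp only [glue, Relation.Map, Pi.sup_apply, sup_Prop_eq]
  aesop

theorem reflTransGen_glue_scomp_right_iff (u v : A ⊕ (B ⊕ D)) :
    ReflTransGen (glue P (scomp Q S)) u v ↔ ReflTransGen (glue P (glue Q S))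
      (Sum.map id (Sum.map id Sum.inr) u) (Sum.map id (Sum.map id Sum.inr) v) := by
  have hpull : ∀ (y : A ⊕ (B ⊕ D)) (z : B ⊕ (C ⊕ D)),
      Sum.map id (Sum.map id Sum.inr) y = Sum.inr z ↔
        ∃ w, Sum.inr w = y ∧ Sum.map id Sum.inr w = z := by
    rintro (a | w) z <;> simp [eq_comm]
  have hH := reflTransGen_map_onFun_iff (N := glue Q S) Sum.inr_injective Sum.inr_injective
    (injective_id.sumMap (injective_id.sumMap Sum.inr_injective)) hpull
  rw [glue_glue_eq_map_sup, glue_eq_sup]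
  exact reflTransGen_sup_map_iff hH u v

theorem reflTransGen_glue_scomp_left_iff (u v : A ⊕ (C ⊕ D)) :
    ReflTransGen (glue (scomp P Q) S) u v ↔ ReflTransGen (glue P (glue Q S))
      (Sum.map id Sum.inr u) (Sum.map id Sum.inr v) := by
  have hpull : ∀ (y : A ⊕ (C ⊕ D)) (z : A ⊕ (B ⊕ C)),
      Sum.map id Sum.inr y = Sum.map id (Sum.map id Sum.inl) z ↔
        ∃ w, Sum.map id Sum.inl w = y ∧ Sum.map id Sum.inr w = z := by
    rintro (a | c | d) (a' | b' | c') <;> simp [eq_comm]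
  have hH := reflTransGen_map_onFun_iff (N := glue P Q)
    (injective_id.sumMap Sum.inl_injective)
    (injective_id.sumMap (injective_id.sumMap Sum.inl_injective))
    (injective_id.sumMap Sum.inr_injective) hpull
  rw [glue_glue_eq_sup_map, glue_eq_sup, sup_comm]
  exact reflTransGen_sup_map_iff hH u v

end

theorem stmt6_general (P : A ⊕ B → A ⊕ B → Prop) (Q : B ⊕ C → B ⊕ C → Prop)
    (S : C ⊕ D → C ⊕ D → Prop) :
    scomp (scomp P Q) S = scomp P (scomp Q S) := by
  have hι : ∀ x : A ⊕ D, Sum.map id Sum.inr (Sum.map id Sum.inr x : A ⊕ (C ⊕ D)) =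
      Sum.map id (Sum.map id Sum.inr) (Sum.map id Sum.inr x : A ⊕ (B ⊕ D)) := by
    rintro (a | d) <;> rfl
  ext x y
  rw [scomp, scomp, reflTransGen_glue_scomp_left_iff, reflTransGen_glue_scomp_right_iff, hι, hι]

theorem stmt6 (P : A ⊕ B → A ⊕ B → Prop) (Q : B ⊕ C → B ⊕ C → Prop)
    (S : C ⊕ D → C ⊕ D → Prop)
    (hPr : Reflexive P) (hPt : Transitive P)
    (hQr : Reflexive Q) (hQt : Transitive Q)
    (hSr : Reflexive S) (hSt : Transitive S) :
    scomp (scomp P Q) S = scomp P (scomp Q S) :=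
  stmt6_general P Q S
end

section
/- The assignment f ↦ f_{A₁,B₂} of split equivalences to functions preserves composition: for f : A → B and g : B → C, (g ∘ f)_{A₁,C₂} = g_{B₁,C₂} ∘ f_{A₁,B₂}, where the right-hand composition is composition of split preorders. -/
universe u

variable {A B C D : Type u}

/-- The split equivalence induced by a function `f : A → B`: it relates `(a,1)`
with `(f a,2)` in both directions, relates `(a,1)` with `(a',1)` whenever
`f a = f a'`, and contains all reflexive pairs on `B₂`. -/
def funSpl {A B : Type u} (f : A → B) : A ⊕ B → A ⊕ B → Prop := fun x y =>
  (∃ a b, x = Sum.inl a ∧ y = Sum.inr b ∧ f a = b) ∨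
  (∃ a b, x = Sum.inr b ∧ y = Sum.inl a ∧ f a = b) ∨
  (∃ a a', x = Sum.inl a ∧ y = Sum.inl a' ∧ f a = f a') ∨
  (∃ b, x = Sum.inr b ∧ y = Sum.inr b)

/- The split equivalence of `f` is the kernel of the map `A ⊕ B → B` collapsing each `a` to `f a`.
Gluing the kernels of `f` and `g` relates only points with the same image under the collapse
`A ⊕ B ⊕ C → C`, so the composite is contained in the kernel of `g ∘ f`. Conversely each
`(a,1)` is joined to `(g (f a),2)` through `(f a,3)`, and the glued relation is symmetric,
so any two points with the same image under `g ∘ f` are connected. -/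

theorem funSpl_iff {f : A → B} {x y : A ⊕ B} :
    funSpl f x y ↔ Sum.elim f id x = Sum.elim f id y := by
  rcases x with a | b <;> rcases y with a' | b' <;> simp [funSpl, eq_comm]

instance (f : A → B) : Std.Symm (funSpl f) where
  symm _ _ h := funSpl_iff.2 (funSpl_iff.1 h).symm

instance (P : A ⊕ B → A ⊕ B → Prop) (Q : B ⊕ C → B ⊕ C → Prop) [Std.Symm P] [Std.Symm Q] :
    Std.Symm (glue P Q) where
  symm _ _ h := by
    rcases h with ⟨u, v, huv, rfl, rfl⟩ | ⟨u, v, huv, rfl, rfl⟩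
    · exact .inl ⟨v, u, symm huv, rfl, rfl⟩
    · exact .inr ⟨v, u, symm huv, rfl, rfl⟩

theorem elim_eq_of_reflTransGen_glue_funSpl {f : A → B} {g : B → C} {x y : A ⊕ (B ⊕ C)}
    (h : Relation.ReflTransGen (glue (funSpl f) (funSpl g)) x y) :
    Sum.elim (g ∘ f) (Sum.elim g id) x = Sum.elim (g ∘ f) (Sum.elim g id) y := by
  refine (Relation.reflTransGen_eq_self (r := (· = ·))).le _ _ (h.lift _ ?_)
  rintro _ _ (⟨u, v, huv, rfl, rfl⟩ | ⟨u, v, huv, rfl, rfl⟩) <;> have := funSpl_iff.1 huv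
  · rcases u with a | b <;> rcases v with a' | b' <;> simpa [Function.onFun] using congrArg g this
  · rcases u with b | c <;> rcases v with b' | c' <;> simpa [Function.onFun] using this

theorem reflTransGen_glue_funSpl_to_image (f : A → B) (g : B → C) (x : A ⊕ C) :
    Relation.ReflTransGen (glue (funSpl f) (funSpl g)) (Sum.map id Sum.inr x)
      (Sum.inr (Sum.inr (Sum.elim (g ∘ f) id x))) := by
  rcases x with a | c
  · have hf : glue (funSpl f) (funSpl g) (Sum.inl a) (Sum.inr (Sum.inl (f a))) :=
      .inl ⟨Sum.inl a, Sum.inr (f a), funSpl_iff.2 rfl, rfl, rfl⟩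
    have hg : glue (funSpl f) (funSpl g) (Sum.inr (Sum.inl (f a))) (Sum.inr (Sum.inr (g (f a)))) :=
      .inr ⟨Sum.inl (f a), Sum.inr (g (f a)), funSpl_iff.2 rfl, rfl, rfl⟩
    exact .tail (.single hf) hg
  · exact .refl

theorem stmt12 (f : A → B) (g : B → C) :
    funSpl (g ∘ f) = scomp (funSpl f) (funSpl g) := by
  funext x y
  apply propext
  rw [funSpl_iff]
  constructor
  · intro h
    have hy := symm (reflTransGen_glue_funSpl_to_image f g y)
    rw [← h] at hy
    exact (reflTransGen_glue_funSpl_to_image f g x).trans hy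
  · intro h
    rcases x with a | c <;> rcases y with a' | c' <;>
      simpa using elim_eq_of_reflTransGen_glue_funSpl h
end

section
/- The category Rel of binary relations between finite ordinals is maximal in the following sense: if v, w : n → m are two distinct relations, then the smallest congruence on Rel (compatible with composition and the biproduct structure +) identifying v and w identifies all parallel pairs of arrows, i.e., forces 1₁ = 0^{1,1} and hence collapses Rel to a preorder. -/
/-- An arrow of `Rel` from `n` to `m`: a binary relation between `Fin n` and
`Fin m`. -/
abbrev RelArrow (n m : ℕ) := Fin n → Fin m → Prop

/-- Composition of relations (diagrammatic order). -/
def rcomp {n m k : ℕ} (R : RelArrow n m) (S : RelArrow m k) : RelArrow n k :=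
  fun i j => ∃ p, R i p ∧ S p j

/-- The empty relation `0^{n,m}`. -/
def zeroRel (n m : ℕ) : RelArrow n m := fun _ _ => False

/-- The identity relation `1ₙ`. -/
def oneRel (n : ℕ) : RelArrow n n := fun i j => i = j

/-- The biproduct `f + g` of relations. -/
def plusRel {n m k l : ℕ} (f : RelArrow n m) (g : RelArrow k l) :
    RelArrow (n + k) (m + l) := fun i j =>
  (∃ i' j', i = Fin.castAdd k i' ∧ j = Fin.castAdd l j' ∧ f i' j') ∨
  (∃ i' j', i = Fin.natAdd n i' ∧ j = Fin.natAdd m j' ∧ g i' j')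

/-- The diagonal `Δ^n : n → n + n`, relating `i` to both of its copies. -/
def diag (n : ℕ) : RelArrow n (n + n) := fun i j =>
  j = Fin.castAdd n i ∨ j = Fin.natAdd n i

/-- The codiagonal `∇^m : m + m → m`, relating both copies of `j` to `j`. -/
def codiag (m : ℕ) : RelArrow (m + m) m := fun j i =>
  j = Fin.castAdd m i ∨ j = Fin.natAdd m i

/-- Union of parallel arrows defined by the biproduct structure:
`f ∪ g = ∇^m ∘ (f + g) ∘ Δ^n`. -/
def runion {n m : ℕ} (f g : RelArrow n m) : RelArrow n m :=
  rcomp (rcomp (diag n) (plusRel f g)) (codiag m)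

/-! Probing `v` and `w` at a coordinate where they differ, by composing with the point relations
`1 → n` and `m → 1`, identifies `1₁` with `0^{1,1}`. If `1ₖ ~ 0ₖ`, adding `1₁` on the right gives
`1ₖ₊₁ ~ {(last, last)}`; conjugating by a transposition gives `1ₖ₊₁ ~ {(i, i)}` for every point
`i`, and for two distinct points `1 = 1 ∘ 1 ~ {(i, i)} ∘ {(j, j)} = 0`. Finally
`f = 1 ∘ f ~ 0 ∘ f = 0` for every `f`. -/

lemma one_rcomp {k l : ℕ} (f : RelArrow k l) : rcomp (oneRel k) f = f := by
  funext i j; simp [rcomp, oneRel]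

lemma zero_rcomp {k l p : ℕ} (f : RelArrow k l) : rcomp (zeroRel p k) f = zeroRel p l := by
  funext i j; simp [rcomp, zeroRel]

lemma oneRel_one_eq_const_true : oneRel 1 = fun _ _ => True := by
  funext i j; simp [oneRel, Subsingleton.elim i j]

lemma plusRel_one_one (k : ℕ) : plusRel (oneRel k) (oneRel 1) = oneRel (k + 1) := by
  funext i j
  apply propext
  constructor
  · rintro (⟨i', j', rfl, rfl, h⟩ | ⟨i', j', rfl, rfl, h⟩) <;> (cases h; rfl)
  · rintro (rfl : i = j)
    induction i using Fin.lastCases with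
    | last => exact Or.inr ⟨0, 0, rfl, rfl, rfl⟩
    | cast i' => exact Or.inl ⟨i', i', rfl, rfl, rfl⟩

def pointIn {n : ℕ} (i : Fin n) : RelArrow 1 n := fun _ p => p = i

def pointOut {m : ℕ} (j : Fin m) : RelArrow m 1 := fun q _ => q = j

lemma pointIn_rcomp_rcomp_pointOut {n m : ℕ} (v : RelArrow n m) (i : Fin n) (j : Fin m) :
    rcomp (rcomp (pointIn i) v) (pointOut j) = fun _ _ => v i j := by
  funext x y; simp [rcomp, pointIn, pointOut]

def pointRel {n : ℕ} (i : Fin n) : RelArrow n n := fun a b => a = i ∧ b = i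

lemma plusRel_zero_one (k : ℕ) : plusRel (zeroRel k k) (oneRel 1) = pointRel (Fin.last k) := by
  funext i j
  apply propext
  constructor
  · rintro (⟨i', j', -, -, ⟨⟩⟩ | ⟨i', j', rfl, rfl, -⟩)
    simp [pointRel, Fin.ext_iff, Fin.natAdd, Subsingleton.elim i' 0, Subsingleton.elim j' 0]
  · rintro ⟨rfl, rfl⟩
    exact Or.inr ⟨0, 0, rfl, rfl, rfl⟩

lemma pointRel_rcomp_pointRel {n : ℕ} {i j : Fin n} (hij : i ≠ j) :
    rcomp (pointRel i) (pointRel j) = zeroRel n n := by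
  funext a b
  simp only [rcomp, pointRel, zeroRel, eq_iff_iff, iff_false]
  rintro ⟨p, ⟨-, rfl⟩, rfl, -⟩
  exact hij rfl

def permRel {n : ℕ} (σ : Equiv.Perm (Fin n)) : RelArrow n n := fun a b => b = σ a

lemma permRel_conj {n : ℕ} (σ : Equiv.Perm (Fin n)) (f : RelArrow n n) :
    rcomp (rcomp (permRel σ) f) (permRel σ.symm) = fun a b => f (σ a) (σ b) := by
  funext a b
  simp [rcomp, permRel, Equiv.eq_symm_apply]

lemma oneRel_apply_perm {n : ℕ} (σ : Equiv.Perm (Fin n)) :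
    (fun a b => oneRel n (σ a) (σ b)) = oneRel n := by
  funext a b; simp [oneRel]

lemma pointRel_apply_perm {n : ℕ} (σ : Equiv.Perm (Fin n)) (i : Fin n) :
    (fun a b => pointRel i (σ a) (σ b)) = pointRel (σ.symm i) := by
  funext a b; simp [pointRel, ← Equiv.eq_symm_apply]

structure IsCompCongruence (Cong : ∀ k l : ℕ, RelArrow k l → RelArrow k l → Prop) : Prop where
  equiv : ∀ k l, Equivalence (Cong k l)
  rcomp_left : ∀ {k l p : ℕ} {f g : RelArrow k l} (h : RelArrow p k),
    Cong k l f g → Cong p l (rcomp h f) (rcomp h g)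
  rcomp_right : ∀ {k l p : ℕ} {f g : RelArrow k l} (h : RelArrow l p),
    Cong k l f g → Cong k p (rcomp f h) (rcomp g h)

namespace IsCompCongruence

variable {Cong : ∀ k l : ℕ, RelArrow k l → RelArrow k l → Prop}

lemma rcomp_congr (hC : IsCompCongruence Cong) {k l p : ℕ} {f f' : RelArrow k l}
    {g g' : RelArrow l p} (hf : Cong k l f f') (hg : Cong l p g g') :
    Cong k p (rcomp f g) (rcomp f' g') :=
  (hC.equiv k p).trans (hC.rcomp_right g hf) (hC.rcomp_left f' hg)

lemma one_zero_of_ne (hC : IsCompCongruence Cong) {n m : ℕ} {v w : RelArrow n m} (hvw : v ≠ w)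
    (hc : Cong n m v w) : Cong 1 1 (oneRel 1) (zeroRel 1 1) := by
  obtain ⟨i, j, hij⟩ : ∃ i j, v i j ≠ w i j := by
    by_contra! h
    exact hvw (funext₂ h)
  have h := hC.rcomp_right (pointOut j) (hC.rcomp_left (pointIn i) hc)
  rw [pointIn_rcomp_rcomp_pointOut, pointIn_rcomp_rcomp_pointOut] at h
  rw [oneRel_one_eq_const_true]
  by_cases hv : v i j
  · have hw : ¬ w i j := fun hw => hij (propext ⟨fun _ => hw, fun _ => hv⟩)
    simp only [hv, hw] at h
    exact h
  · have hw : w i j := by_contra fun hw => hij (propext ⟨hv.elim, hw.elim⟩)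
    simp only [hv, hw] at h
    exact (hC.equiv 1 1).symm h

lemma one_pointRel_of_one_pointRel (hC : IsCompCongruence Cong) {n : ℕ} {i : Fin n}
    (h : Cong n n (oneRel n) (pointRel i)) (j : Fin n) :
    Cong n n (oneRel n) (pointRel j) := by
  have h' := hC.rcomp_right (permRel (Equiv.swap i j).symm)
    (hC.rcomp_left (permRel (Equiv.swap i j)) h)
  rwa [permRel_conj, permRel_conj, oneRel_apply_perm, pointRel_apply_perm,
    Equiv.symm_swap, Equiv.swap_apply_left] at h'

lemma one_zero_of_one_pointRel (hC : IsCompCongruence Cong) {n : ℕ} {i j : Fin n} (hij : i ≠ j)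
    (h : Cong n n (oneRel n) (pointRel i)) : Cong n n (oneRel n) (zeroRel n n) := by
  have h' := hC.rcomp_congr h (hC.one_pointRel_of_one_pointRel h j)
  rwa [one_rcomp, pointRel_rcomp_pointRel hij] at h'

lemma one_zero_of_dim_one (hC : IsCompCongruence Cong)
    (hplusR : ∀ (k l : ℕ) (f g : RelArrow k l),
      Cong k l f g → Cong (k + 1) (l + 1) (plusRel f (oneRel 1)) (plusRel g (oneRel 1)))
    (h : Cong 1 1 (oneRel 1) (zeroRel 1 1)) :
    ∀ k, Cong k k (oneRel k) (zeroRel k k)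
  | 0 => Subsingleton.elim (oneRel 0) (zeroRel 0 0) ▸ (hC.equiv 0 0).refl _
  | 1 => h
  | k + 2 => by
    have h' := hplusR _ _ _ _ (one_zero_of_dim_one hC hplusR h (k + 1))
    rw [plusRel_one_one, plusRel_zero_one] at h'
    exact hC.one_zero_of_one_pointRel (Fin.last_pos.ne : (0 : Fin (k + 2)) ≠ _).symm h'

lemma cong_of_one_zero (hC : IsCompCongruence Cong) {k l : ℕ}
    (h : Cong k k (oneRel k) (zeroRel k k)) (f g : RelArrow k l) : Cong k l f g := by
  have zero_of : ∀ f : RelArrow k l, Cong k l f (zeroRel k l) := fun f => by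
    simpa only [one_rcomp, zero_rcomp] using hC.rcomp_right f h
  exact (hC.equiv k l).trans (zero_of f) ((hC.equiv k l).symm (zero_of g))

end IsCompCongruence

theorem stmt17_general (n m : ℕ) (v w : RelArrow n m) (hvw : v ≠ w)
    (Cong : ∀ k l : ℕ, RelArrow k l → RelArrow k l → Prop)
    (hequiv : ∀ k l, Equivalence (Cong k l))
    (hcompL : ∀ (k l p : ℕ) (f g : RelArrow k l) (h : RelArrow p k),
      Cong k l f g → Cong p l (rcomp h f) (rcomp h g))
    (hcompR : ∀ (k l p : ℕ) (f g : RelArrow k l) (h : RelArrow l p),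
      Cong k l f g → Cong k p (rcomp f h) (rcomp g h))
    (hplusR : ∀ (k l : ℕ) (f g : RelArrow k l),
      Cong k l f g → Cong (k + 1) (l + 1) (plusRel f (oneRel 1)) (plusRel g (oneRel 1)))
    (hvw' : Cong n m v w) :
    Cong 1 1 (oneRel 1) (zeroRel 1 1) ∧
    ∀ (k l : ℕ) (f g : RelArrow k l), Cong k l f g := by
  have hC : IsCompCongruence Cong := ⟨hequiv, hcompL _ _ _ _ _, hcompR _ _ _ _ _⟩
  have h11 := hC.one_zero_of_ne hvw hvw'
  exact ⟨h11, fun k l => hC.cong_of_one_zero (hC.one_zero_of_dim_one hplusR h11 k)⟩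

theorem stmt17 (n m : ℕ) (v w : RelArrow n m) (hvw : v ≠ w)
    (Cong : ∀ k l : ℕ, RelArrow k l → RelArrow k l → Prop)
    (hequiv : ∀ k l, Equivalence (Cong k l))
    (hcompL : ∀ (k l p : ℕ) (f g : RelArrow k l) (h : RelArrow p k),
      Cong k l f g → Cong p l (rcomp h f) (rcomp h g))
    (hcompR : ∀ (k l p : ℕ) (f g : RelArrow k l) (h : RelArrow l p),
      Cong k l f g → Cong k p (rcomp f h) (rcomp g h))
    (hplusL : ∀ (k l : ℕ) (f g : RelArrow k l),
      Cong k l f g → Cong (1 + k) (1 + l) (plusRel (oneRel 1) f) (plusRel (oneRel 1) g))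
    (hplusR : ∀ (k l : ℕ) (f g : RelArrow k l),
      Cong k l f g → Cong (k + 1) (l + 1) (plusRel f (oneRel 1)) (plusRel g (oneRel 1)))
    (hvw' : Cong n m v w) :
    Cong 1 1 (oneRel 1) (zeroRel 1 1) ∧
    ∀ (k l : ℕ) (f g : RelArrow k l), Cong k l f g :=
  stmt17_general n m v w hvw Cong hequiv hcompL hcompR hplusR hvw'
end
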